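/- arXiv:0912.1418 — 8 statements merged into one kernel-verified Lean document; each statement's English description precedes it below -/
import Mathlib

section
/- Let b, c > 0 be real numbers. If x, y > 0 satisfy the parabola equation y·√b = x² and the circle equation y² = x·(c/b − x), then x³ + b·x = c. -/
/-!
Squaring the parabola equation gives `b y² = x⁴`, while the circle equation times `b` gives
`b y² = c x - b x²`. Hence `x⁴ + b x² = c x`, and dividing by `x ≠ 0` yields the cubic.
-/

lemma sq_mul_eq_pow_four_of_mul_sqrt_eq {b x y : ℝ} (hb : 0 ≤ b) (h : y * √b = x ^ 2) :
    y ^ 2 * b = x ^ 4 := by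
  rw [← Real.sq_sqrt hb, ← mul_pow, h]
  ring

theorem khayyam_eq13_general (b c x y : ℝ) (hb : 0 < b)
    (hx : 0 < x)
    (hpar : y * Real.sqrt b = x ^ 2)
    (hcirc : y ^ 2 = x * (c / b - x)) :
    x ^ 3 + b * x = c := by
  have hquartic : y ^ 2 * b = x ^ 4 := sq_mul_eq_pow_four_of_mul_sqrt_eq hb.le hpar
  have hcircle : y ^ 2 * b = x * c - b * x ^ 2 := by
    rw [hcirc]
    field_simp
  have hx_mul : x * (x ^ 3 + b * x) = x * c := by linear_combination hcircle - hquartic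
  exact mul_left_cancel₀ hx.ne' hx_mul

theorem khayyam_eq13 (b c x y : ℝ) (hb : 0 < b) (hc : 0 < c)
    (hx : 0 < x) (hy : 0 < y)
    (hpar : y * Real.sqrt b = x ^ 2)
    (hcirc : y ^ 2 = x * (c / b - x)) :
    x ^ 3 + b * x = c :=
  khayyam_eq13_general b c x y hb hx hpar hcirc
end

section
/- Let a, b, c > 0. If x, y > 0 satisfy the hyperbola equation √b·(c/b − x) = x·y and the circle equation y² = (x + a)·(c/b − x), then x³ + a·x² + b·x = c. -/
/-! Write `d = c/b - x`. Squaring the hyperbola equation gives `b d² = x² y² = x² (x + a) d` by the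
circle equation, and `d ≠ 0` because `x y ≠ 0`; cancelling `d` leaves `b d = x² (x + a)`, which is
the cubic since `b d = c - b x`. -/

theorem sq_mul_eq_of_hyperbola_circle {R : Type*} [CommRing R] [IsDomain R] {s a d x y : R}
    (hd : d ≠ 0) (hhyp : s * d = x * y) (hcirc : y ^ 2 = (x + a) * d) :
    s ^ 2 * d = x ^ 2 * (x + a) :=
  mul_right_cancel₀ hd (by linear_combination (s * d + x * y) * hhyp + x ^ 2 * hcirc)

theorem khayyam_eq19_general (a b c x y : ℝ)
    (hx : 0 < x) (hy : 0 < y)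
    (hhyp : Real.sqrt b * (c / b - x) = x * y)
    (hcirc : y ^ 2 = (x + a) * (c / b - x)) :
    x ^ 3 + a * x ^ 2 + b * x = c := by
  have hxy : Real.sqrt b * (c / b - x) ≠ 0 := hhyp ▸ mul_ne_zero hx.ne' hy.ne'
  obtain ⟨hs, hd⟩ := mul_ne_zero_iff.1 hxy
  have hb : 0 < b := Real.sqrt_ne_zero'.1 hs
  have hcubic := sq_mul_eq_of_hyperbola_circle hd hhyp hcirc
  rw [Real.sq_sqrt hb.le] at hcubic
  linear_combination -hcubic + mul_div_cancel₀ c hb.ne'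

theorem khayyam_eq19 (a b c x y : ℝ) (ha : 0 < a) (hb : 0 < b) (hc : 0 < c)
    (hx : 0 < x) (hy : 0 < y)
    (hhyp : Real.sqrt b * (c / b - x) = x * y)
    (hcirc : y ^ 2 = (x + a) * (c / b - x)) :
    x ^ 3 + a * x ^ 2 + b * x = c :=
  khayyam_eq19_general a b c x y hx hy hhyp hcirc
end

section
/- Let a, b, c > 0. If x, y > 0 satisfy √b·(x − c/b) = x·y and y² = (x + a)·(x − c/b), then x³ + a·x² + c = b·x. -/
/-! Squaring the first relation and substituting the second gives
`b (x - c/b)² = x² (x + a) (x - c/b)`; since `x y ≠ 0`, the factor `x - c/b` is nonzero and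
cancels, leaving `b x - c = x³ + a x²`. -/

theorem sq_mul_eq_of_mul_eq_mul_of_sq_eq {R : Type*} [CommRing R] [IsDomain R] {s d x y e : R}
    (h : s * d = x * y) (hy : y ^ 2 = e * d) (hd : d ≠ 0) : s ^ 2 * d = x ^ 2 * e := by
  refine mul_right_cancel₀ hd ?_
  linear_combination (s * d + x * y) * h + x ^ 2 * hy

theorem khayyam_eq20_general (a b c x y : ℝ) (hb : 0 < b)
    (hx : 0 < x) (hy : 0 < y)
    (hhyp1 : Real.sqrt b * (x - c / b) = x * y)
    (hhyp2 : y ^ 2 = (x + a) * (x - c / b)) :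
    x ^ 3 + a * x ^ 2 + c = b * x := by
  have hd : x - c / b ≠ 0 :=
    right_ne_zero_of_mul (hhyp1 ▸ mul_ne_zero hx.ne' hy.ne')
  have key := sq_mul_eq_of_mul_eq_mul_of_sq_eq hhyp1 hhyp2 hd
  rw [Real.sq_sqrt hb.le, mul_sub, mul_div_cancel₀ c hb.ne'] at key
  linear_combination -key

theorem khayyam_eq20 (a b c x y : ℝ) (ha : 0 < a) (hb : 0 < b) (hc : 0 < c)
    (hx : 0 < x) (hy : 0 < y)
    (hhyp1 : Real.sqrt b * (x - c / b) = x * y)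
    (hhyp2 : y ^ 2 = (x + a) * (x - c / b)) :
    x ^ 3 + a * x ^ 2 + c = b * x :=
  khayyam_eq20_general a b c x y hb hx hy hhyp1 hhyp2
end

section
/- Let a, b, c > 0. If x, y > 0 satisfy √b·(x + c/b) = x·y and y² = (x − a)·(x + c/b), then x³ = a·x² + b·x + c. -/
theorem Real.mul_sq_eq_sq_of_sqrt_mul_eq {b u v : ℝ} (hb : 0 ≤ b) (h : √b * u = v) :
    b * u ^ 2 = v ^ 2 := by
  rw [← h, mul_pow, Real.sq_sqrt hb]

theorem khayyam_eq22_general (a b c x y : ℝ) (hb : 0 < b) (hc : 0 < c)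
    (hx : 0 < x)
    (hhyp1 : Real.sqrt b * (x + c / b) = x * y)
    (hhyp2 : y ^ 2 = (x - a) * (x + c / b)) :
    x ^ 3 = a * x ^ 2 + b * x + c := by
  have hu : 0 < x + c / b := by positivity
  have hsq : b * (x + c / b) ^ 2 = x ^ 2 * y ^ 2 := by
    rw [Real.mul_sq_eq_sq_of_sqrt_mul_eq hb.le hhyp1, mul_pow]
  have hcubic : b * (x + c / b) = x ^ 2 * (x - a) :=
    mul_right_cancel₀ hu.ne' (by linear_combination hsq + x ^ 2 * hhyp2)
  have hexpand : b * (x + c / b) = b * x + c := by field_simp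
  linear_combination hexpand - hcubic

theorem khayyam_eq22 (a b c x y : ℝ) (ha : 0 < a) (hb : 0 < b) (hc : 0 < c)
    (hx : 0 < x) (hy : 0 < y)
    (hhyp1 : Real.sqrt b * (x + c / b) = x * y)
    (hhyp2 : y ^ 2 = (x - a) * (x + c / b)) :
    x ^ 3 = a * x ^ 2 + b * x + c :=
  khayyam_eq22_general a b c x y hb hc hx hhyp1 hhyp2
end

section
/- Let a, b, c > 0. If x, y > 0 satisfy √b·(x + c/b) = x·y and y² = (x + a)·(x + c/b), then x³ + a·x² = b·x + c. -/
/-! Squaring the first hyperbola's equation and substituting the second gives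
`b (x + c/b)² = x² (x + a) (x + c/b)`; cancelling the positive factor `x + c/b` leaves
`b x + c = x² (x + a)`, which is the cubic. -/

theorem mul_eq_sq_mul_add_of_sq_eq {R : Type*} [CommRing R] [IsDomain R] {a b d x y : R}
    (hd : d ≠ 0) (h₁ : b * d ^ 2 = (x * y) ^ 2) (h₂ : y ^ 2 = (x + a) * d) :
    b * d = x ^ 2 * (x + a) :=
  mul_right_cancel₀ hd (by linear_combination h₁ + x ^ 2 * h₂)

theorem khayyam_eq23_general (a b c x y : ℝ) (hb : 0 < b) (hc : 0 < c)
    (hx : 0 < x)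
    (hhyp1 : Real.sqrt b * (x + c / b) = x * y)
    (hhyp2 : y ^ 2 = (x + a) * (x + c / b)) :
    x ^ 3 + a * x ^ 2 = b * x + c := by
  have hd : 0 < x + c / b := by positivity
  have hsq : b * (x + c / b) ^ 2 = (x * y) ^ 2 := by
    rw [← hhyp1, mul_pow, Real.sq_sqrt hb.le]
  calc x ^ 3 + a * x ^ 2 = x ^ 2 * (x + a) := by ring
    _ = b * (x + c / b) := (mul_eq_sq_mul_add_of_sq_eq hd.ne' hsq hhyp2).symm
    _ = b * x + c := by rw [mul_add, mul_div_cancel₀ c hb.ne']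

theorem khayyam_eq23 (a b c x y : ℝ) (ha : 0 < a) (hb : 0 < b) (hc : 0 < c)
    (hx : 0 < x) (hy : 0 < y)
    (hhyp1 : Real.sqrt b * (x + c / b) = x * y)
    (hhyp2 : y ^ 2 = (x + a) * (x + c / b)) :
    x ^ 3 + a * x ^ 2 = b * x + c :=
  khayyam_eq23_general a b c x y hb hc hx hhyp1 hhyp2
end

section
/- Let a, b, c > 0. If x, y > 0 satisfy √b·(x − c/b) = x·y and y² = (a − x)·(x − c/b), then x³ + b·x = a·x² + c. -/
/-! Squaring the hyperbola equation `√b (x - c/b) = x y` and substituting the circle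
equation gives `b (x - c/b)² = x² (a - x)(x - c/b)`. Since `x y ≠ 0`, the factor `x - c/b`
is nonzero and can be cancelled, leaving `b x - c = x² (a - x)`, which is the cubic. -/

theorem cubic_of_hyperbola_of_circle {K : Type*} [Field K] {a b c s x y : K} (hb : b ≠ 0)
    (hs : s ^ 2 = b) (hxy : x * y ≠ 0) (hhyp : s * (x - c / b) = x * y)
    (hcirc : y ^ 2 = (a - x) * (x - c / b)) :
    x ^ 3 + b * x = a * x ^ 2 + c := by
  have hd : x - c / b ≠ 0 := fun h => hxy (by rw [← hhyp, h, mul_zero])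
  have hsq : b * (x - c / b) * (x - c / b) = x ^ 2 * (a - x) * (x - c / b) := by
    linear_combination -(x - c / b) ^ 2 * hs + (s * (x - c / b) + x * y) * hhyp + x ^ 2 * hcirc
  have hlin : b * (x - c / b) = b * x - c := by rw [mul_sub, mul_div_cancel₀ c hb]
  linear_combination hlin.symm.trans (mul_right_cancel₀ hd hsq)

theorem khayyam_eq24_general (a b c x y : ℝ) (hb : 0 < b)
    (hx : 0 < x) (hy : 0 < y)
    (hhyp : Real.sqrt b * (x - c / b) = x * y)
    (hcirc : y ^ 2 = (a - x) * (x - c / b)) :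
    x ^ 3 + b * x = a * x ^ 2 + c :=
  cubic_of_hyperbola_of_circle hb.ne' (Real.sq_sqrt hb.le) (mul_pos hx hy).ne' hhyp hcirc

theorem khayyam_eq24 (a b c x y : ℝ) (ha : 0 < a) (hb : 0 < b) (hc : 0 < c)
    (hx : 0 < x) (hy : 0 < y)
    (hhyp : Real.sqrt b * (x - c / b) = x * y)
    (hcirc : y ^ 2 = (a - x) * (x - c / b)) :
    x ^ 3 + b * x = a * x ^ 2 + c :=
  khayyam_eq24_general a b c x y hb hx hy hhyp hcirc
end

section
/- Let a, b, c > 0. If x, y > 0 satisfy √b·(x − c/b) = x·y and y² = (x − a)·(x − c/b), then x³ + c = a·x² + b·x. -/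
/-! Squaring the first equation and substituting the second gives
`b (x - c/b)² = x² (x - a) (x - c/b)`; the common factor `x - c/b` is nonzero because `x y ≠ 0`,
and cancelling it leaves `b x - c = x² (x - a)`, which is the cubic. -/

theorem mul_eq_sq_mul_of_sqrt_mul_eq {b t u x y : ℝ} (hb : 0 ≤ b) (hxy : x * y ≠ 0)
    (h₁ : √b * t = x * y) (h₂ : y ^ 2 = u * t) : b * t = x ^ 2 * u := by
  have ht : t ≠ 0 := by
    rintro rfl
    exact hxy (by rw [← h₁, mul_zero])
  apply mul_right_cancel₀ ht
  calc b * t * t = (√b * t) ^ 2 := by rw [mul_pow, Real.sq_sqrt hb]; ring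
    _ = (x * y) ^ 2 := by rw [h₁]
    _ = x ^ 2 * u * t := by rw [mul_pow, h₂]; ring

theorem khayyam_eq25_general (a b c x y : ℝ) (hb : 0 < b)
    (hx : 0 < x) (hy : 0 < y)
    (hhyp1 : Real.sqrt b * (x - c / b) = x * y)
    (hhyp2 : y ^ 2 = (x - a) * (x - c / b)) :
    x ^ 3 + c = a * x ^ 2 + b * x := by
  have key := mul_eq_sq_mul_of_sqrt_mul_eq hb.le (mul_pos hx hy).ne' hhyp1 hhyp2
  rw [mul_sub, mul_div_cancel₀ c hb.ne'] at key
  linear_combination -key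

theorem khayyam_eq25 (a b c x y : ℝ) (ha : 0 < a) (hb : 0 < b) (hc : 0 < c)
    (hx : 0 < x) (hy : 0 < y)
    (hhyp1 : Real.sqrt b * (x - c / b) = x * y)
    (hhyp2 : y ^ 2 = (x - a) * (x - c / b)) :
    x ^ 3 + c = a * x ^ 2 + b * x :=
  khayyam_eq25_general a b c x y hb hx hy hhyp1 hhyp2
end

section
/- For real numbers p, q and nonzero z, z is a root of z³ + p·z + q = 0 if and only if the point (z, z²) is a point other than the origin lying on both the parabola y = z² and the circle centered at (−q/2, (1−p)/2) passing through the origin. -/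
/-! Substituting `y = x²` into the equation of the circle through the origin centred at `(a, b)`
leaves `x⁴ + (1 - 2b) x² - 2a x = 0`. With `a = -q/2` and `b = (1 - p)/2` this is
`z (z³ + p z + q) = 0`, so for `z ≠ 0` the circle meets the parabola exactly at the roots of the cubic. -/

theorem sq_sub_add_sq_sq_sub_sub_eq_mul {R : Type*} [CommRing R] (a b x : R) :
    (x - a) ^ 2 + (x ^ 2 - b) ^ 2 - (a ^ 2 + b ^ 2) = x * (x ^ 3 + (1 - 2 * b) * x - 2 * a) := by
  ring

theorem descartes_cubic_circle (p q z : ℝ) (hz : z ≠ 0) :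
    z ^ 3 + p * z + q = 0 ↔
      ((z, z ^ 2) ≠ ((0 : ℝ), (0 : ℝ)) ∧
        (z - (-q / 2)) ^ 2 + (z ^ 2 - (1 - p) / 2) ^ 2 =
          (-q / 2) ^ 2 + ((1 - p) / 2) ^ 2) := by
  have hpoint : (z, z ^ 2) ≠ ((0 : ℝ), (0 : ℝ)) := fun h => hz (congrArg Prod.fst h)
  have hquartic : (z - (-q / 2)) ^ 2 + (z ^ 2 - (1 - p) / 2) ^ 2 - ((-q / 2) ^ 2 + ((1 - p) / 2) ^ 2)
      = z * (z ^ 3 + p * z + q) := by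
    rw [sq_sub_add_sq_sq_sub_sub_eq_mul]
    ring
  rw [← sub_eq_zero (a := (z - (-q / 2)) ^ 2 + _), hquartic, mul_eq_zero, or_iff_right hz]
  exact (and_iff_right hpoint).symm
end
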